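/- arXiv:2601.09198 — 10 statements merged into one kernel-verified Lean document; each statement's English description precedes it below -/
import Mathlib

section
/- If (μ, x) is a stable outcome of the market (G, v), then μ is an optimal matching, i.e., Σ_{ij∈μ} v_{ij} ≥ Σ_{ij∈μ'} v_{ij} for every matching μ' of G. -/
open Finset

variable {I J : Type*}

def IsMatching [DecidableEq I] [DecidableEq J]
    (G μ : Finset (I × J)) : Prop :=
  μ ⊆ G ∧ ∀ p ∈ μ, ∀ q ∈ μ, p ≠ q → p.1 ≠ q.1 ∧ p.2 ≠ q.2

def surplus (v : I × J → ℝ) (μ : Finset (I × J)) : ℝ := ∑ p ∈ μ, v p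

def Feasible [Fintype I] [Fintype J]
    (v : I × J → ℝ) (μ : Finset (I × J)) (x : I → ℝ) (y : J → ℝ) : Prop :=
  ∑ i, x i + ∑ j, y j = surplus v μ

def Stable [Fintype I] [Fintype J] [DecidableEq I] [DecidableEq J]
    (G : Finset (I × J)) (v : I × J → ℝ)
    (μ : Finset (I × J)) (x : I → ℝ) (y : J → ℝ) : Prop :=
  IsMatching G μ ∧ Feasible v μ x y ∧
    (∀ i, 0 ≤ x i) ∧ (∀ j, 0 ≤ y j) ∧ ∀ p ∈ G, v p ≤ x p.1 + y p.2

def Optimal [DecidableEq I] [DecidableEq J]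
    (G : Finset (I × J)) (v : I × J → ℝ) (μ : Finset (I × J)) : Prop :=
  IsMatching G μ ∧ ∀ μ', IsMatching G μ' → surplus v μ' ≤ surplus v μ

noncomputable def NBS (v di dj : ℝ) : ℝ × ℝ :=
  (di + (v - di - dj) / 2, dj + (v - di - dj) / 2)

def CredibleOutside [Fintype I] [Fintype J] [DecidableEq I] [DecidableEq J]
    (G : Finset (I × J)) (v : I × J → ℝ) (p : I × J) (di dj : ℝ) : Prop :=
  ∃ μ' x' y', Stable (G.erase p) v μ' x' y' ∧ di = x' p.1 ∧ dj = y' p.2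

def CBS [Fintype I] [Fintype J] [DecidableEq I] [DecidableEq J]
    (G : Finset (I × J)) (v : I × J → ℝ)
    (μ : Finset (I × J)) (x : I → ℝ) (y : J → ℝ) : Prop :=
  Stable G v μ x y ∧
    ∀ p ∈ μ, ∃ di dj, CredibleOutside G v p di dj ∧
      (x p.1, y p.2) = NBS (v p) di dj

def Essential [DecidableEq I] [DecidableEq J]
    (G : Finset (I × J)) (v : I × J → ℝ) (p : I × J) : Prop :=
  p ∈ G ∧ ∀ μ, Optimal G v μ → p ∈ μ

theorem stmt1 [Fintype I] [Fintype J] [DecidableEq I] [DecidableEq J]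
    (G μ : Finset (I × J)) (v : I × J → ℝ) (x : I → ℝ) (y : J → ℝ)
    (hv : ∀ p ∈ G, 0 ≤ v p)
    (h : Stable G v μ x y) :
    Optimal G v μ := by
  obtain ⟨hm, hfeas, hx, hy, hstab⟩ := h
  refine ⟨hm, fun μ' hm' => ?_⟩
  have key : surplus v μ' ≤ ∑ i, x i + ∑ j, y j := by
    have h1 : surplus v μ' ≤ ∑ p ∈ μ', (x p.1 + y p.2) :=
      Finset.sum_le_sum fun p hp => hstab p (hm'.1 hp)
    have h2 : ∑ p ∈ μ', x p.1 ≤ ∑ i, x i := by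
      have e : ∑ i ∈ μ'.image Prod.fst, x i = ∑ p ∈ μ', x p.1 :=
        Finset.sum_image (fun p hp q hq hpq => by
          by_contra hne
          exact ((hm'.2 p hp q hq hne).1 hpq).elim)
      rw [← e]
      exact Finset.sum_le_sum_of_subset_of_nonneg (Finset.subset_univ _)
        (fun i _ _ => hx i)
    have h3 : ∑ p ∈ μ', y p.2 ≤ ∑ j, y j := by
      have e : ∑ j ∈ μ'.image Prod.snd, y j = ∑ p ∈ μ', y p.2 :=
        Finset.sum_image (fun p hp q hq hpq => by
          by_contra hne
          exact ((hm'.2 p hp q hq hne).2 hpq).elim)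
      rw [← e]
      exact Finset.sum_le_sum_of_subset_of_nonneg (Finset.subset_univ _)
        (fun j _ _ => hy j)
    calc surplus v μ' ≤ ∑ p ∈ μ', (x p.1 + y p.2) := h1
      _ = ∑ p ∈ μ', x p.1 + ∑ p ∈ μ', y p.2 := Finset.sum_add_distrib
      _ ≤ ∑ i, x i + ∑ j, y j := add_le_add h2 h3
  rw [hfeas] at key
  exact key
end

section
/- If (μ, x) is a stable outcome of (G, v) and μ' is any optimal matching of (G, v), then (μ', x) is also a stable outcome of (G, v). -/
open Finset

variable {I J : Type*}

theorem stmt2 [Fintype I] [Fintype J] [DecidableEq I] [DecidableEq J]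
    (G μ μ' : Finset (I × J)) (v : I × J → ℝ) (x : I → ℝ) (y : J → ℝ)
    (hv : ∀ p ∈ G, 0 ≤ v p)
    (h : Stable G v μ x y) (h' : Optimal G v μ') :
    Stable G v μ' x y := by
  obtain ⟨hm, hf, hx, hy, hb⟩ := h
  obtain ⟨hm', hopt⟩ := h'
  have key : ∀ (ν : Finset (I × J)), IsMatching G ν →
      surplus v ν ≤ ∑ i, x i + ∑ j, y j := by
    intro ν hν
    obtain ⟨hsub, hdisj⟩ := hν
    have h1 : ∑ p ∈ ν, x p.1 ≤ ∑ i, x i := by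
      rw [← Finset.sum_image (f := x) (g := Prod.fst)
        (fun a ha b hb hab => by
          by_contra hne
          exact (hdisj a ha b hb hne).1 hab)]
      exact Finset.sum_le_sum_of_subset_of_nonneg (Finset.subset_univ _)
        (fun i _ _ => hx i)
    have h2 : ∑ p ∈ ν, y p.2 ≤ ∑ j, y j := by
      rw [← Finset.sum_image (f := y) (g := Prod.snd)
        (fun a ha b hb hab => by
          by_contra hne
          exact (hdisj a ha b hb hne).2 hab)]
      exact Finset.sum_le_sum_of_subset_of_nonneg (Finset.subset_univ _)
        (fun j _ _ => hy j)
    calc surplus v ν ≤ ∑ p ∈ ν, (x p.1 + y p.2) :=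
          Finset.sum_le_sum (fun p hp => hb p (hsub hp))
      _ = ∑ p ∈ ν, x p.1 + ∑ p ∈ ν, y p.2 := Finset.sum_add_distrib
      _ ≤ ∑ i, x i + ∑ j, y j := add_le_add h1 h2
  have heq : surplus v μ' = ∑ i, x i + ∑ j, y j :=
    le_antisymm (key μ' hm') (hf ▸ hopt μ hm)
  exact ⟨hm', heq.symm, hx, hy, hb⟩
end

section
/- If an agent k is unmatched by some optimal matching of (G, v), then x_k = 0 in every stable outcome (μ, x) of (G, v). -/
open Finset

variable {I J : Type*}

lemma surplus_le_dual [Fintype I] [Fintype J] [DecidableEq I] [DecidableEq J]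
    (G : Finset (I × J)) (v : I × J → ℝ) (μ' : Finset (I × J))
    (x : I → ℝ) (y : J → ℝ) (hm : IsMatching G μ')
    (hG : ∀ p ∈ G, v p ≤ x p.1 + y p.2)
    (hx : ∀ i, 0 ≤ x i) (hy : ∀ j, 0 ≤ y j)
    (s : Finset I) (t : Finset J)
    (hs : ∀ p ∈ μ', p.1 ∉ s) (ht : ∀ p ∈ μ', p.2 ∉ t) :
    surplus v μ' + (∑ a ∈ s, x a + ∑ b ∈ t, y b) ≤ ∑ i, x i + ∑ j, y j := by
  have h1 : surplus v μ' ≤ ∑ p ∈ μ', (x p.1 + y p.2) :=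
    Finset.sum_le_sum fun p hp => hG p (hm.1 hp)
  rw [Finset.sum_add_distrib] at h1
  have e1 : ∑ p ∈ μ', x p.1 = ∑ a ∈ μ'.image Prod.fst, x a := by
    refine (Finset.sum_image ?_).symm
    intro p hp q hq h
    by_contra hne
    exact (hm.2 p hp q hq hne).1 h
  have e2 : ∑ p ∈ μ', y p.2 = ∑ b ∈ μ'.image Prod.snd, y b := by
    refine (Finset.sum_image ?_).symm
    intro p hp q hq h
    by_contra hne
    exact (hm.2 p hp q hq hne).2 h
  have d1 : Disjoint (μ'.image Prod.fst) s := by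
    rw [Finset.disjoint_left]
    intro a ha has
    obtain ⟨p, hp, rfl⟩ := Finset.mem_image.mp ha
    exact hs p hp has
  have d2 : Disjoint (μ'.image Prod.snd) t := by
    rw [Finset.disjoint_left]
    intro b hb hbt
    obtain ⟨p, hp, rfl⟩ := Finset.mem_image.mp hb
    exact ht p hp hbt
  have hx1 : ∑ a ∈ (μ'.image Prod.fst) ∪ s, x a ≤ ∑ a, x a :=
    Finset.sum_le_sum_of_subset_of_nonneg (Finset.subset_univ _)
      (fun a _ _ => hx a)
  have hy1 : ∑ b ∈ (μ'.image Prod.snd) ∪ t, y b ≤ ∑ b, y b :=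
    Finset.sum_le_sum_of_subset_of_nonneg (Finset.subset_univ _)
      (fun b _ _ => hy b)
  rw [Finset.sum_union d1] at hx1
  rw [Finset.sum_union d2] at hy1
  linarith

theorem stmt3 [Fintype I] [Fintype J] [DecidableEq I] [DecidableEq J]
    (G : Finset (I × J)) (v : I × J → ℝ)
    (hv : ∀ p ∈ G, 0 ≤ v p) :
    (∀ i : I, (∃ μ', Optimal G v μ' ∧ ∀ p ∈ μ', p.1 ≠ i) →
      ∀ μ x y, Stable G v μ x y → x i = 0) ∧
    (∀ j : J, (∃ μ', Optimal G v μ' ∧ ∀ p ∈ μ', p.2 ≠ j) →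
      ∀ μ x y, Stable G v μ x y → y j = 0) := by
  constructor
  · rintro i ⟨μ', hopt, hi⟩ μ x y ⟨hmμ, hfeas, hx, hy, hG⟩
    have h := surplus_le_dual G v μ' x y hopt.1 hG hx hy {i} ∅
      (fun p hp => by simpa using hi p hp) (fun p _ => by simp)
    simp only [Finset.sum_singleton, Finset.sum_empty, add_zero] at h
    have h2 : surplus v μ ≤ surplus v μ' := hopt.2 μ hmμ
    have h3 : ∑ i, x i + ∑ j, y j = surplus v μ := hfeas
    have h4 := hx i
    linarith
  · rintro j ⟨μ', hopt, hj⟩ μ x y ⟨hmμ, hfeas, hx, hy, hG⟩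
    have h := surplus_le_dual G v μ' x y hopt.1 hG hx hy ∅ {j}
      (fun p _ => by simp) (fun p hp => by simpa using hj p hp)
    simp only [Finset.sum_singleton, Finset.sum_empty, zero_add] at h
    have h2 : surplus v μ ≤ surplus v μ' := hopt.2 μ hmμ
    have h3 : ∑ i, x i + ∑ j, y j = surplus v μ := hfeas
    have h4 := hy j
    linarith
end

section
/- Suppose ij ∈ μ for some optimal matching μ of the market (G, v). If (μ', x') is a stable outcome of the submarket (G \ {ij}, v), then x'_i + x'_j ≤ v_{ij}. -/
open Finset

variable {I J : Type*}

theorem stmt4 [Fintype I] [Fintype J] [DecidableEq I] [DecidableEq J]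
    (G μ : Finset (I × J)) (v : I × J → ℝ) (p : I × J)
    (hv : ∀ q ∈ G, 0 ≤ v q)
    (hopt : Optimal G v μ) (hp : p ∈ μ)
    (μ' : Finset (I × J)) (x' : I → ℝ) (y' : J → ℝ)
    (hstab : Stable (G.erase p) v μ' x' y') :
    x' p.1 + y' p.2 ≤ v p := by
  obtain ⟨⟨hμG, hμm⟩, hoptmax⟩ := hopt
  obtain ⟨⟨hμ'G, hμ'm⟩, hfeas, hx0, hy0, hdual⟩ := hstab
  have hsur : surplus v μ' ≤ surplus v μ :=
    hoptmax μ' ⟨hμ'G.trans (Finset.erase_subset _ _), hμ'm⟩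
  have hstep : surplus v μ ≤ v p + ∑ q ∈ μ.erase p, (x' q.1 + y' q.2) := by
    rw [surplus, ← Finset.add_sum_erase _ _ hp]
    gcongr with q hq
    rcases Finset.mem_erase.mp hq with ⟨hqp, hqμ⟩
    exact hdual q (Finset.mem_erase.mpr ⟨hqp, hμG hqμ⟩)
  have hinj1 : ∀ q ∈ μ.erase p, ∀ r ∈ μ.erase p, q.1 = r.1 → q = r := by
    intro q hq r hr h
    by_contra hne
    exact (hμm q (Finset.mem_of_mem_erase hq) r (Finset.mem_of_mem_erase hr) hne).1 h
  have hinj2 : ∀ q ∈ μ.erase p, ∀ r ∈ μ.erase p, q.2 = r.2 → q = r := by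
    intro q hq r hr h
    by_contra hne
    exact (hμm q (Finset.mem_of_mem_erase hq) r (Finset.mem_of_mem_erase hr) hne).2 h
  have hx : ∑ q ∈ μ.erase p, x' q.1 ≤ ∑ i ∈ Finset.univ.erase p.1, x' i := by
    rw [← Finset.sum_image hinj1]
    apply Finset.sum_le_sum_of_subset_of_nonneg
    · intro i hi
      obtain ⟨q, hq, rfl⟩ := Finset.mem_image.mp hi
      rcases Finset.mem_erase.mp hq with ⟨hqp, hqμ⟩
      exact Finset.mem_erase.mpr ⟨(hμm q hqμ p hp hqp).1, Finset.mem_univ _⟩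
    · intro i _ _; exact hx0 i
  have hy : ∑ q ∈ μ.erase p, y' q.2 ≤ ∑ j ∈ Finset.univ.erase p.2, y' j := by
    rw [← Finset.sum_image hinj2]
    apply Finset.sum_le_sum_of_subset_of_nonneg
    · intro j hj
      obtain ⟨q, hq, rfl⟩ := Finset.mem_image.mp hj
      rcases Finset.mem_erase.mp hq with ⟨hqp, hqμ⟩
      exact Finset.mem_erase.mpr ⟨(hμm q hqμ p hp hqp).2, Finset.mem_univ _⟩
    · intro j _ _; exact hy0 j
  have ex : ∑ i ∈ Finset.univ.erase p.1, x' i = ∑ i, x' i - x' p.1 :=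
    Finset.sum_erase_eq_sub (Finset.mem_univ _)
  have ey : ∑ j ∈ Finset.univ.erase p.2, y' j = ∑ j, y' j - y' p.2 :=
    Finset.sum_erase_eq_sub (Finset.mem_univ _)
  have hsplit : ∑ q ∈ μ.erase p, (x' q.1 + y' q.2)
      = ∑ q ∈ μ.erase p, x' q.1 + ∑ q ∈ μ.erase p, y' q.2 := Finset.sum_add_distrib
  have hfeas' : ∑ i, x' i + ∑ j, y' j = surplus v μ' := hfeas
  linarith
end

section
/- If μ' is an optimal matching of (G, v) and x is the payoff vector of some credible bargaining solution (μ, x), then (μ', x) is also a credible bargaining solution of (G, v). -/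
open Finset

variable {I J : Type*}

theorem stmt7 [Fintype I] [Fintype J] [DecidableEq I] [DecidableEq J]
    (G μ μ' : Finset (I × J)) (v : I × J → ℝ) (x : I → ℝ) (y : J → ℝ)
    (hv : ∀ p ∈ G, 0 ≤ v p)
    (hopt : Optimal G v μ') (h : CBS G v μ x y) :
    CBS G v μ' x y := by
  obtain ⟨⟨hμm, hfeas, hx, hy, hblock⟩, hnbs⟩ := h
  obtain ⟨hμ'm, hopt'⟩ := hopt
  -- key sum bounds
  have hsum1 : ∑ p ∈ μ', x p.1 ≤ ∑ i, x i := by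
    have e : ∑ i ∈ μ'.image Prod.fst, x i = ∑ p ∈ μ', x p.1 :=
      Finset.sum_image (fun p hp q hq hpq => by
        by_contra hne
        exact (hμ'm.2 p hp q hq hne).1 hpq)
    rw [← e]
    exact Finset.sum_le_sum_of_subset_of_nonneg (Finset.subset_univ _)
      (fun i _ _ => hx i)
  have hsum2 : ∑ p ∈ μ', y p.2 ≤ ∑ j, y j := by
    have e : ∑ j ∈ μ'.image Prod.snd, y j = ∑ p ∈ μ', y p.2 :=
      Finset.sum_image (fun p hp q hq hpq => by
        by_contra hne
        exact (hμ'm.2 p hp q hq hne).2 hpq)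
    rw [← e]
    exact Finset.sum_le_sum_of_subset_of_nonneg (Finset.subset_univ _)
      (fun j _ _ => hy j)
  have hle : ∀ p ∈ μ', v p ≤ x p.1 + y p.2 := fun p hp => hblock p (hμ'm.1 hp)
  have hchain : surplus v μ' ≤ ∑ p ∈ μ', (x p.1 + y p.2) :=
    Finset.sum_le_sum hle
  have hchain2 : ∑ p ∈ μ', (x p.1 + y p.2) ≤ ∑ i, x i + ∑ j, y j := by
    rw [Finset.sum_add_distrib]
    exact add_le_add hsum1 hsum2
  have hμsur : surplus v μ ≤ surplus v μ' := hopt' μ hμm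
  have heq : surplus v μ' = ∑ p ∈ μ', (x p.1 + y p.2) := by
    have := hfeas
    unfold Feasible at this
    linarith
  have hfeas' : Feasible v μ' x y := by
    unfold Feasible at hfeas ⊢
    linarith
  have hterm : ∀ p ∈ μ', v p = x p.1 + y p.2 :=
    (Finset.sum_eq_sum_iff_of_le hle).mp heq
  refine ⟨⟨hμ'm, hfeas', hx, hy, hblock⟩, fun p hp => ?_⟩
  by_cases hpm : p ∈ μ
  · exact hnbs p hpm
  · refine ⟨x p.1, y p.2, ⟨μ, x, y, ⟨⟨?_, hμm.2⟩, hfeas, hx, hy,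
      fun q hq => hblock q (Finset.mem_of_mem_erase hq)⟩, rfl, rfl⟩, ?_⟩
    · exact (Finset.subset_erase).mpr ⟨hμm.1, hpm⟩
    · have := hterm p hp
      simp only [NBS, Prod.mk.injEq]
      constructor <;> linarith
end

section
/- Suppose (μ, x) is a stable outcome of (G, v), ij ∈ μ, and there exists an optimal matching μ' of (G, v) with ij ∉ μ'. Then there exist credible outside options (d_i, d_j) for the pair ij such that (x_i, x_j) = NBS(v_{ij}; d_i, d_j); specifically, one may take d_i = x_i and d_j = x_j. -/
open Finset

variable {I J : Type*}

lemma pair_sum_le_total [Fintype I] [Fintype J] [DecidableEq I] [DecidableEq J]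
    (G μ : Finset (I × J)) (x : I → ℝ) (y : J → ℝ)
    (hm : IsMatching G μ) (hx : ∀ i, 0 ≤ x i) (hy : ∀ j, 0 ≤ y j) :
    ∑ q ∈ μ, (x q.1 + y q.2) ≤ ∑ i, x i + ∑ j, y j := by
  rw [Finset.sum_add_distrib]
  have i1 : ∀ a ∈ μ, ∀ b ∈ μ, a.1 = b.1 → a = b := fun a ha b hb hab => by
    by_contra hne; exact (hm.2 a ha b hb hne).1 hab
  have i2 : ∀ a ∈ μ, ∀ b ∈ μ, a.2 = b.2 → a = b := fun a ha b hb hab => by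
    by_contra hne; exact (hm.2 a ha b hb hne).2 hab
  have e1 : ∑ i ∈ μ.image Prod.fst, x i = ∑ q ∈ μ, x q.1 :=
    Finset.sum_image i1
  have e2 : ∑ j ∈ μ.image Prod.snd, y j = ∑ q ∈ μ, y q.2 :=
    Finset.sum_image i2
  have h1 : ∑ q ∈ μ, x q.1 ≤ ∑ i, x i := by
    rw [← e1]
    exact Finset.sum_le_sum_of_subset_of_nonneg (Finset.subset_univ _)
      (fun i _ _ => hx i)
  have h2 : ∑ q ∈ μ, y q.2 ≤ ∑ j, y j := by
    rw [← e2]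
    exact Finset.sum_le_sum_of_subset_of_nonneg (Finset.subset_univ _)
      (fun j _ _ => hy j)
  linarith

theorem stmt8 [Fintype I] [Fintype J] [DecidableEq I] [DecidableEq J]
    (G μ μ' : Finset (I × J)) (v : I × J → ℝ) (x : I → ℝ) (y : J → ℝ)
    (p : I × J)
    (hv : ∀ q ∈ G, 0 ≤ v q)
    (h : Stable G v μ x y) (hp : p ∈ μ)
    (hopt : Optimal G v μ') (hp' : p ∉ μ') :
    CredibleOutside G v p (x p.1) (y p.2) ∧
      (x p.1, y p.2) = NBS (v p) (x p.1) (y p.2) := by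
  obtain ⟨hm, hf, hx, hy, hlink⟩ := h
  obtain ⟨hm', hopt'⟩ := hopt
  -- per-pair equality in μ
  have hsum1 : surplus v μ ≤ ∑ q ∈ μ, (x q.1 + y q.2) :=
    Finset.sum_le_sum (fun q hq => hlink q (hm.1 hq))
  have hsum2 : ∑ q ∈ μ, (x q.1 + y q.2) ≤ surplus v μ := by
    rw [← hf]; exact pair_sum_le_total G μ x y hm hx hy
  have hzero : ∑ q ∈ μ, (x q.1 + y q.2 - v q) = 0 := by
    rw [Finset.sum_sub_distrib]
    have : ∑ q ∈ μ, v q = surplus v μ := rfl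
    linarith
  have hpeq : v p = x p.1 + y p.2 := by
    have := (Finset.sum_eq_zero_iff_of_nonneg
      (fun q hq => by linarith [hlink q (hm.1 hq)])).mp hzero p hp
    linarith
  constructor
  · -- credible outside using μ'
    refine ⟨μ', x, y, ⟨⟨?_, fun a ha b hb => hm'.2 a ha b hb⟩,
      ?_, hx, hy, fun q hq => hlink q (Finset.mem_of_mem_erase hq)⟩, rfl, rfl⟩
    · intro a ha
      exact Finset.mem_erase.mpr ⟨fun he => hp' (he ▸ ha), hm'.1 ha⟩
    · -- feasibility: surplus μ' = surplus μ
      have h1 : surplus v μ' ≤ ∑ q ∈ μ', (x q.1 + y q.2) :=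
        Finset.sum_le_sum (fun q hq => hlink q (hm'.1 hq))
      have h2 : ∑ q ∈ μ', (x q.1 + y q.2) ≤ ∑ i, x i + ∑ j, y j :=
        pair_sum_le_total G μ' x y hm' hx hy
      have h3 : surplus v μ ≤ surplus v μ' := hopt' μ hm
      have hf' : ∑ i, x i + ∑ j, y j = surplus v μ := hf
      show ∑ i, x i + ∑ j, y j = surplus v μ'
      linarith
  · simp [NBS, hpeq]
end

section
/- A stable outcome (μ, x) is a credible bargaining solution if for every essential link ij ∈ μ (a link matched by every optimal matching of (G, v)), the division (x_i, x_j) equals NBS(v_{ij}; d_i, d_j) for some credible outside options (d_i, d_j). -/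
open Finset

variable {I J : Type*}

lemma matching_sum_le [Fintype I] [Fintype J]
    (μ : Finset (I × J)) (hd : ∀ p ∈ μ, ∀ q ∈ μ, p ≠ q → p.1 ≠ q.1 ∧ p.2 ≠ q.2)
    (x : I → ℝ) (y : J → ℝ) (hx : ∀ i, 0 ≤ x i) (hy : ∀ j, 0 ≤ y j) :
    ∑ p ∈ μ, (x p.1 + y p.2) ≤ ∑ i, x i + ∑ j, y j := by
  classical
  have hinj1 : ∀ p ∈ μ, ∀ q ∈ μ, p.1 = q.1 → p = q := by
    intro p hp q hq h1
    by_contra hne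
    exact (hd p hp q hq hne).1 h1
  have hinj2 : ∀ p ∈ μ, ∀ q ∈ μ, p.2 = q.2 → p = q := by
    intro p hp q hq h1
    by_contra hne
    exact (hd p hp q hq hne).2 h1
  have h1 : ∑ p ∈ μ, x p.1 ≤ ∑ i, x i := by
    rw [← Finset.sum_image hinj1]
    exact Finset.sum_le_sum_of_subset_of_nonneg (Finset.subset_univ _) (fun i _ _ => hx i)
  have h2 : ∑ p ∈ μ, y p.2 ≤ ∑ j, y j := by
    rw [← Finset.sum_image hinj2]
    exact Finset.sum_le_sum_of_subset_of_nonneg (Finset.subset_univ _) (fun j _ _ => hy j)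
  rw [Finset.sum_add_distrib]
  exact add_le_add h1 h2

theorem stmt9 [Fintype I] [Fintype J] [DecidableEq I] [DecidableEq J]
    (G μ : Finset (I × J)) (v : I × J → ℝ) (x : I → ℝ) (y : J → ℝ)
    (hv : ∀ p ∈ G, 0 ≤ v p)
    (h : Stable G v μ x y)
    (hess : ∀ p ∈ μ, Essential G v p →
      ∃ di dj, CredibleOutside G v p di dj ∧ (x p.1, y p.2) = NBS (v p) di dj) :
    CBS G v μ x y := by
  classical
  obtain ⟨⟨hsub, hdist⟩, hfeas, hx, hy, hstab⟩ := h
  have hge : surplus v μ ≤ ∑ p ∈ μ, (x p.1 + y p.2) :=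
    Finset.sum_le_sum (fun p hp => hstab p (hsub hp))
  have hle : ∑ p ∈ μ, (x p.1 + y p.2) ≤ ∑ i, x i + ∑ j, y j :=
    matching_sum_le μ hdist x y hx hy
  have heq : ∑ p ∈ μ, v p = ∑ p ∈ μ, (x p.1 + y p.2) := by
    have : ∑ i, x i + ∑ j, y j = surplus v μ := hfeas
    unfold surplus at *
    linarith
  have hpair : ∀ p ∈ μ, x p.1 + y p.2 = v p := by
    intro p hp
    exact ((Finset.sum_eq_sum_iff_of_le (fun q hq => hstab q (hsub hq))).mp heq p hp).symm
  have hopt : ∀ μ', IsMatching G μ' → surplus v μ' ≤ surplus v μ := by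
    rintro μ' ⟨hsub', hdist'⟩
    have h1 : surplus v μ' ≤ ∑ p ∈ μ', (x p.1 + y p.2) :=
      Finset.sum_le_sum (fun p hp => hstab p (hsub' hp))
    have h2 := matching_sum_le μ' hdist' x y hx hy
    have h3 : ∑ i, x i + ∑ j, y j = surplus v μ := hfeas
    linarith
  refine ⟨⟨⟨hsub, hdist⟩, hfeas, hx, hy, hstab⟩, ?_⟩
  intro p hp
  by_cases hE : Essential G v p
  · exact hess p hp hE
  · have hpG : p ∈ G := hsub hp
    unfold Essential at hE
    push_neg at hE
    obtain ⟨μ'', ⟨hm'', hopt''⟩, hpnot⟩ := hE hpG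
    refine ⟨x p.1, y p.2, ⟨μ'', x, y, ?_, rfl, rfl⟩, ?_⟩
    · refine ⟨⟨?_, hm''.2⟩, ?_, hx, hy, fun q hq => hstab q (Finset.erase_subset _ _ hq)⟩
      · intro q hq
        exact Finset.mem_erase.mpr ⟨fun h => hpnot (h ▸ hq), hm''.1 hq⟩
      · have h1 : surplus v μ'' ≤ surplus v μ := hopt μ'' hm''
        have h2 : surplus v μ ≤ surplus v μ'' := hopt'' μ ⟨hsub, hdist⟩
        unfold Feasible
        rw [hfeas]
        linarith
    · have hv0 : v p - x p.1 - y p.2 = 0 := by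
        have := hpair p hp
        linarith
      simp [NBS, hv0]
end

section
/- In a unit-surplus market, if ij is an essential link, then in every stable outcome (μ', x') of the submarket (G \ {ij}, v), x'_i = 0 and x'_j = 0. -/
open Finset

variable {I J : Type*}

theorem stmt14 [Fintype I] [Fintype J] [DecidableEq I] [DecidableEq J]
    (G : Finset (I × J)) (v : I × J → ℝ) (p : I × J)
    (hv : ∀ q ∈ G, v q = 1)
    (hess : Essential G v p)
    (μ' : Finset (I × J)) (x' : I → ℝ) (y' : J → ℝ)
    (hstab : Stable (G.erase p) v μ' x' y') :
    x' p.1 = 0 ∧ y' p.2 = 0 := by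
  classical
  obtain ⟨hpG, hessμ⟩ := hess
  obtain ⟨⟨hsub', hmat'⟩, hfeas', hx0, hy0, hblock⟩ := hstab
  -- existence of an optimal matching of G
  obtain ⟨μ, hμmem, hμmax⟩ := Finset.exists_max_image
    (G.powerset.filter (fun s => IsMatching G s)) (surplus v)
    ⟨∅, by simp [IsMatching]⟩
  rw [Finset.mem_filter] at hμmem
  have hopt : Optimal G v μ := by
    refine ⟨hμmem.2, fun μ'' hμ'' => ?_⟩
    exact hμmax μ'' (Finset.mem_filter.2 ⟨Finset.mem_powerset.2 hμ''.1, hμ''⟩)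
  have hpμ : p ∈ μ := hessμ μ hopt
  obtain ⟨hsubμ, hmatμ⟩ := hμmem.2
  -- μ' is a matching of G
  have hsubG : μ' ⊆ G := hsub'.trans (Finset.erase_subset _ _)
  have hμ'G : IsMatching G μ' := ⟨hsubG, hmat'⟩
  -- surpluses equal cardinalities
  have hsμ' : surplus v μ' = (μ'.card : ℝ) := by
    unfold surplus
    rw [Finset.sum_congr rfl (fun q hq => hv q (hsubG hq))]
    simp
  have hsμ : surplus v μ = (μ.card : ℝ) := by
    unfold surplus
    rw [Finset.sum_congr rfl (fun q hq => hv q (hsubμ hq))]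
    simp
  -- μ' is not optimal in G, so strictly smaller
  have hne : surplus v μ' ≠ surplus v μ := by
    intro heq
    have : Optimal G v μ' := ⟨hμ'G, fun μ'' h => heq ▸ hopt.2 μ'' h⟩
    exact Finset.notMem_erase p G (hsub' (hessμ μ' this))
  have hlt : (μ'.card : ℝ) < (μ.card : ℝ) := by
    rw [← hsμ', ← hsμ]
    exact lt_of_le_of_ne (hopt.2 μ' hμ'G) hne
  have hcard : (μ'.card : ℝ) ≤ (μ.card : ℝ) - 1 := by
    have : μ'.card < μ.card := by exact_mod_cast hlt
    have : μ'.card + 1 ≤ μ.card := this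
    have := (Nat.cast_le (α := ℝ)).2 this
    push_cast at this
    linarith
  -- ν = μ.erase p
  set ν : Finset (I × J) := μ.erase p with hν
  have hνsub : ν ⊆ G := (Finset.erase_subset _ _).trans hsubμ
  have hp1 : p.1 ∉ ν.image Prod.fst := by
    simp only [Finset.mem_image, not_exists]
    rintro q ⟨hq, hq1⟩
    have hqμ : q ∈ μ := Finset.mem_of_mem_erase hq
    have hqp : q ≠ p := Finset.ne_of_mem_erase hq
    exact (hmatμ q hqμ p hpμ hqp).1 hq1
  have hp2 : p.2 ∉ ν.image Prod.snd := by
    simp only [Finset.mem_image, not_exists]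
    rintro q ⟨hq, hq2⟩
    have hqμ : q ∈ μ := Finset.mem_of_mem_erase hq
    have hqp : q ≠ p := Finset.ne_of_mem_erase hq
    exact (hmatμ q hqμ p hpμ hqp).2 hq2
  -- sums over images
  have hinj1 : ∀ q ∈ ν, ∀ r ∈ ν, q.1 = r.1 → q = r := by
    intro q hq r hr h
    by_contra hne'
    exact (hmatμ q (Finset.mem_of_mem_erase hq) r (Finset.mem_of_mem_erase hr) hne').1 h
  have hinj2 : ∀ q ∈ ν, ∀ r ∈ ν, q.2 = r.2 → q = r := by
    intro q hq r hr h
    by_contra hne'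
    exact (hmatμ q (Finset.mem_of_mem_erase hq) r (Finset.mem_of_mem_erase hr) hne').2 h
  have hsum1 : ∑ i ∈ ν.image Prod.fst, x' i = ∑ q ∈ ν, x' q.1 :=
    Finset.sum_image hinj1
  have hsum2 : ∑ j ∈ ν.image Prod.snd, y' j = ∑ q ∈ ν, y' q.2 :=
    Finset.sum_image hinj2
  have hX : x' p.1 + ∑ q ∈ ν, x' q.1 ≤ ∑ i, x' i := by
    rw [← hsum1]
    have : ∑ i ∈ insert p.1 (ν.image Prod.fst), x' i
        = x' p.1 + ∑ i ∈ ν.image Prod.fst, x' i := Finset.sum_insert hp1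
    rw [← this]
    exact Finset.sum_le_sum_of_subset_of_nonneg (Finset.subset_univ _)
      (fun i _ _ => hx0 i)
  have hY : y' p.2 + ∑ q ∈ ν, y' q.2 ≤ ∑ j, y' j := by
    rw [← hsum2]
    have : ∑ j ∈ insert p.2 (ν.image Prod.snd), y' j
        = y' p.2 + ∑ j ∈ ν.image Prod.snd, y' j := Finset.sum_insert hp2
    rw [← this]
    exact Finset.sum_le_sum_of_subset_of_nonneg (Finset.subset_univ _)
      (fun j _ _ => hy0 j)
  -- each pair in ν is blocked
  have hνblock : ∀ q ∈ ν, (1 : ℝ) ≤ x' q.1 + y' q.2 := by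
    intro q hq
    have hqG : q ∈ G := hνsub hq
    have hqp : q ≠ p := Finset.ne_of_mem_erase hq
    have := hblock q (Finset.mem_erase.2 ⟨hqp, hqG⟩)
    rwa [hv q hqG] at this
  have hνcard : (ν.card : ℝ) ≤ ∑ q ∈ ν, (x' q.1 + y' q.2) := by
    calc (ν.card : ℝ) = ∑ _q ∈ ν, (1 : ℝ) := by simp
    _ ≤ ∑ q ∈ ν, (x' q.1 + y' q.2) := Finset.sum_le_sum hνblock
  have hνc : (ν.card : ℝ) = (μ.card : ℝ) - 1 := by
    rw [hν, Finset.card_erase_of_mem hpμ]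
    have : 1 ≤ μ.card := Finset.card_pos.2 ⟨p, hpμ⟩
    push_cast [this]
    ring
  have hfeq : ∑ i, x' i + ∑ j, y' j = (μ'.card : ℝ) := by
    rw [hfeas', hsμ']
  have key : x' p.1 + y' p.2 ≤ 0 := by
    have h1 : (μ.card : ℝ) - 1 + (x' p.1 + y' p.2) ≤ ∑ i, x' i + ∑ j, y' j := by
      rw [← hνc]
      have := Finset.sum_add_distrib (s := ν) (f := fun q => x' q.1) (g := fun q => y' q.2)
      linarith [hX, hY, hνcard, this]
    rw [hfeq] at h1
    linarith
  exact ⟨le_antisymm (by linarith [hy0 p.2]) (hx0 p.1),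
         le_antisymm (by linarith [hx0 p.1]) (hy0 p.2)⟩
end

section
/- In a unit-surplus market, an outcome (μ, x) is a credible bargaining solution of (G, v) if and only if it is stable and for every essential link ij ∈ μ, x_i = x_j = 1/2. -/
set_option linter.unusedSectionVars false
set_option maxHeartbeats 1000000


open Finset

variable {I J : Type*}

section helper2
variable [Fintype I] [Fintype J] [DecidableEq I] [DecidableEq J]

variable [Fintype I] [Fintype J] [DecidableEq I] [DecidableEq J]

lemma sum_fst_le (μ : Finset (I × J)) (x : I → ℝ)
    (hm : ∀ p ∈ μ, ∀ q ∈ μ, p ≠ q → p.1 ≠ q.1 ∧ p.2 ≠ q.2)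
    (hx : ∀ i, 0 ≤ x i) :
    ∑ q ∈ μ, x q.1 ≤ ∑ i, x i := by
  have hinj : ∀ p ∈ μ, ∀ q ∈ μ, p.1 = q.1 → p = q := by
    intro p hp q hq h
    by_contra hne
    exact (hm p hp q hq hne).1 h
  rw [← Finset.sum_image hinj]
  exact Finset.sum_le_sum_of_subset_of_nonneg (Finset.subset_univ _)
    (fun i _ _ => hx i)

lemma sum_snd_le (μ : Finset (I × J)) (y : J → ℝ)
    (hm : ∀ p ∈ μ, ∀ q ∈ μ, p ≠ q → p.1 ≠ q.1 ∧ p.2 ≠ q.2)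
    (hy : ∀ j, 0 ≤ y j) :
    ∑ q ∈ μ, y q.2 ≤ ∑ j, y j := by
  have hinj : ∀ p ∈ μ, ∀ q ∈ μ, p.2 = q.2 → p = q := by
    intro p hp q hq h
    by_contra hne
    exact (hm p hp q hq hne).2 h
  rw [← Finset.sum_image hinj]
  exact Finset.sum_le_sum_of_subset_of_nonneg (Finset.subset_univ _)
    (fun j _ _ => hy j)

lemma surplus_eq_card {G μ : Finset (I × J)} {v : I × J → ℝ}
    (hv : ∀ q ∈ G, v q = 1) (hsub : μ ⊆ G) :
    surplus v μ = (μ.card : ℝ) := by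
  unfold surplus
  rw [Finset.sum_congr rfl (fun q hq => hv q (hsub hq))]
  simp

lemma matching_card_le {G μ' : Finset (I × J)} {v : I × J → ℝ}
    {x : I → ℝ} {y : J → ℝ}
    (hv : ∀ q ∈ G, v q = 1) (hm : IsMatching G μ')
    (hx : ∀ i, 0 ≤ x i) (hy : ∀ j, 0 ≤ y j)
    (hcov : ∀ p ∈ G, v p ≤ x p.1 + y p.2) :
    (μ'.card : ℝ) ≤ ∑ i, x i + ∑ j, y j := by
  have h1 : (μ'.card : ℝ) = ∑ q ∈ μ', (1 : ℝ) := by simp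
  have h2 : ∑ q ∈ μ', (1 : ℝ) ≤ ∑ q ∈ μ', (x q.1 + y q.2) := by
    apply Finset.sum_le_sum
    intro q hq
    have := hcov q (hm.1 hq)
    rw [hv q (hm.1 hq)] at this
    exact this
  rw [h1, Finset.sum_add_distrib] at *
  calc ∑ q ∈ μ', (1:ℝ) ≤ _ := h2
    _ ≤ ∑ i, x i + ∑ j, y j :=
      add_le_add (sum_fst_le μ' x hm.2 hx) (sum_snd_le μ' y hm.2 hy)

lemma stable_optimal {G μ : Finset (I × J)} {v : I × J → ℝ}
    {x : I → ℝ} {y : J → ℝ}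
    (hv : ∀ q ∈ G, v q = 1) (hst : Stable G v μ x y) :
    Optimal G v μ := by
  obtain ⟨hm, hf, hx, hy, hcov⟩ := hst
  refine ⟨hm, fun μ' hm' => ?_⟩
  rw [surplus_eq_card hv hm'.1, ← hf]
  exact matching_card_le hv hm' hx hy hcov

lemma stable_pair_eq {G μ : Finset (I × J)} {v : I × J → ℝ}
    {x : I → ℝ} {y : J → ℝ}
    (hv : ∀ q ∈ G, v q = 1) (hst : Stable G v μ x y)
    {p : I × J} (hp : p ∈ μ) :
    x p.1 + y p.2 = 1 := by
  obtain ⟨hm, hf, hx, hy, hcov⟩ := hst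
  have hge : ∀ q ∈ μ, (1:ℝ) ≤ x q.1 + y q.2 := by
    intro q hq
    have := hcov q (hm.1 hq)
    rwa [hv q (hm.1 hq)] at this
  have hsum_le : ∑ q ∈ μ, (x q.1 + y q.2) ≤ (μ.card : ℝ) := by
    rw [Finset.sum_add_distrib]
    have := add_le_add (sum_fst_le μ x hm.2 hx) (sum_snd_le μ y hm.2 hy)
    calc ∑ q ∈ μ, x q.1 + ∑ q ∈ μ, y q.2 ≤ ∑ i, x i + ∑ j, y j := this
      _ = surplus v μ := hf
      _ = (μ.card : ℝ) := surplus_eq_card hv hm.1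
  by_contra hne
  have hgt : (1:ℝ) < x p.1 + y p.2 := lt_of_le_of_ne (hge p hp) (Ne.symm hne)
  have : ∑ q ∈ μ, (1:ℝ) < ∑ q ∈ μ, (x q.1 + y q.2) :=
    Finset.sum_lt_sum hge ⟨p, hp, hgt⟩
  simp only [Finset.sum_const, nsmul_eq_mul, mul_one] at this
  linarith

lemma vanish_fst {G' μ'' : Finset (I × J)} {x' : I → ℝ} {y' : J → ℝ}
    (hm : ∀ p ∈ μ'', ∀ q ∈ μ'', p ≠ q → p.1 ≠ q.1 ∧ p.2 ≠ q.2)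
    (hsub : μ'' ⊆ G')
    (hx : ∀ i, 0 ≤ x' i) (hy : ∀ j, 0 ≤ y' j)
    (hcov : ∀ q ∈ G', (1:ℝ) ≤ x' q.1 + y' q.2)
    (htot : ∑ i, x' i + ∑ j, y' j ≤ (μ''.card : ℝ))
    {i : I} (hi : ∀ q ∈ μ'', q.1 ≠ i) : x' i = 0 := by
  have h1 : (μ''.card : ℝ) ≤ ∑ q ∈ μ'', (x' q.1 + y' q.2) := by
    have : (μ''.card : ℝ) = ∑ q ∈ μ'', (1:ℝ) := by simp
    rw [this]
    exact Finset.sum_le_sum (fun q hq => hcov q (hsub hq))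
  have hinj : ∀ p ∈ μ'', ∀ q ∈ μ'', p.1 = q.1 → p = q := by
    intro p hp q hq h
    by_contra hne
    exact (hm p hp q hq hne).1 h
  have h2 : ∑ q ∈ μ'', x' q.1 ≤ ∑ i' ∈ Finset.univ.erase i, x' i' := by
    rw [← Finset.sum_image hinj]
    apply Finset.sum_le_sum_of_subset_of_nonneg
    · intro a ha
      obtain ⟨q, hq, rfl⟩ := Finset.mem_image.mp ha
      exact Finset.mem_erase.mpr ⟨hi q hq, Finset.mem_univ _⟩
    · exact fun a _ _ => hx a
  have h3 : ∑ i' ∈ Finset.univ.erase i, x' i' = ∑ i', x' i' - x' i :=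
    Finset.sum_erase_eq_sub (Finset.mem_univ i)
  have h4 : ∑ q ∈ μ'', y' q.2 ≤ ∑ j, y' j := sum_snd_le μ'' y' hm hy
  rw [Finset.sum_add_distrib] at h1
  have : x' i ≤ 0 := by linarith
  linarith [hx i]

lemma vanish_snd {G' μ'' : Finset (I × J)} {x' : I → ℝ} {y' : J → ℝ}
    (hm : ∀ p ∈ μ'', ∀ q ∈ μ'', p ≠ q → p.1 ≠ q.1 ∧ p.2 ≠ q.2)
    (hsub : μ'' ⊆ G')
    (hx : ∀ i, 0 ≤ x' i) (hy : ∀ j, 0 ≤ y' j)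
    (hcov : ∀ q ∈ G', (1:ℝ) ≤ x' q.1 + y' q.2)
    (htot : ∑ i, x' i + ∑ j, y' j ≤ (μ''.card : ℝ))
    {j : J} (hj : ∀ q ∈ μ'', q.2 ≠ j) : y' j = 0 := by
  have h1 : (μ''.card : ℝ) ≤ ∑ q ∈ μ'', (x' q.1 + y' q.2) := by
    have : (μ''.card : ℝ) = ∑ q ∈ μ'', (1:ℝ) := by simp
    rw [this]
    exact Finset.sum_le_sum (fun q hq => hcov q (hsub hq))
  have hinj : ∀ p ∈ μ'', ∀ q ∈ μ'', p.2 = q.2 → p = q := by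
    intro p hp q hq h
    by_contra hne
    exact (hm p hp q hq hne).2 h
  have h2 : ∑ q ∈ μ'', y' q.2 ≤ ∑ j' ∈ Finset.univ.erase j, y' j' := by
    rw [← Finset.sum_image hinj]
    apply Finset.sum_le_sum_of_subset_of_nonneg
    · intro a ha
      obtain ⟨q, hq, rfl⟩ := Finset.mem_image.mp ha
      exact Finset.mem_erase.mpr ⟨hj q hq, Finset.mem_univ _⟩
    · exact fun a _ _ => hy a
  have h3 : ∑ j' ∈ Finset.univ.erase j, y' j' = ∑ j', y' j' - y' j :=
    Finset.sum_erase_eq_sub (Finset.mem_univ j)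
  have h4 : ∑ q ∈ μ'', x' q.1 ≤ ∑ i, x' i := sum_fst_le μ'' x' hm hx
  rw [Finset.sum_add_distrib] at h1
  have : y' j ≤ 0 := by linarith
  linarith [hy j]

lemma exists_cover_matching (G' : Finset (I × J)) :
    ∃ (μ' : Finset (I × J)) (x' : I → ℝ) (y' : J → ℝ),
      (μ' ⊆ G' ∧ ∀ p ∈ μ', ∀ q ∈ μ', p ≠ q → p.1 ≠ q.1 ∧ p.2 ≠ q.2) ∧
      (∀ i, 0 ≤ x' i) ∧ (∀ j, 0 ≤ y' j) ∧
      (∀ q ∈ G', (1:ℝ) ≤ x' q.1 + y' q.2) ∧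
      ∑ i, x' i + ∑ j, y' j = (μ'.card : ℝ) := by
  classical
  set N : Finset I → Finset J :=
    fun S => (G'.filter (fun q => q.1 ∈ S)).image Prod.snd with hN
  set d : ℕ := Finset.univ.sup (fun S : Finset I => S.card - (N S).card) with hd
  have hdle : ∀ S : Finset I, S.card ≤ (N S).card + d := by
    intro S
    have h := Finset.le_sup (f := fun S : Finset I => S.card - (N S).card)
      (Finset.mem_univ S)
    rw [← hd] at h
    omega
  -- choose S with S.card = (N S).card + d
  obtain ⟨S, hS⟩ : ∃ S : Finset I, S.card = (N S).card + d := by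
    by_cases h0 : d = 0
    · refine ⟨∅, ?_⟩
      have : N ∅ = ∅ := by simp [hN]
      simp [this, h0]
    · obtain ⟨S, -, hS⟩ := Finset.exists_mem_eq_sup Finset.univ
        ⟨∅, Finset.mem_univ ∅⟩ (fun S : Finset I => S.card - (N S).card)
      rw [← hd] at hS
      refine ⟨S, ?_⟩
      omega
  -- Hall's theorem with d dummy vertices
  set t : I → Finset (J ⊕ Fin d) :=
    fun i => ((N {i}).image (Sum.inl : J → J ⊕ Fin d)) ∪
      ((Finset.univ : Finset (Fin d)).image Sum.inr) with ht
  have hall : ∀ s : Finset I, s.card ≤ (s.biUnion t).card := by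
    intro s
    rcases s.eq_empty_or_nonempty with rfl | ⟨i0, hi0⟩
    · simp
    · have hsub : ((N s).image (Sum.inl : J → J ⊕ Fin d)) ∪
          ((Finset.univ : Finset (Fin d)).image Sum.inr) ⊆ s.biUnion t := by
        intro a ha
        rcases Finset.mem_union.mp ha with ha | ha
        · obtain ⟨j, hj, rfl⟩ := Finset.mem_image.mp ha
          obtain ⟨q, hq, rfl⟩ := Finset.mem_image.mp hj
          have hq' := Finset.mem_filter.mp hq
          refine Finset.mem_biUnion.mpr ⟨q.1, hq'.2, ?_⟩
          refine Finset.mem_union_left _ (Finset.mem_image.mpr ⟨q.2, ?_, rfl⟩)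
          exact Finset.mem_image.mpr
            ⟨q, Finset.mem_filter.mpr ⟨hq'.1, Finset.mem_singleton_self _⟩, rfl⟩
        · exact Finset.mem_biUnion.mpr ⟨i0, hi0, Finset.mem_union_right _ ha⟩
      have hdisj : Disjoint ((N s).image (Sum.inl : J → J ⊕ Fin d))
          ((Finset.univ : Finset (Fin d)).image Sum.inr) := by
        rw [Finset.disjoint_left]
        intro a ha ha'
        obtain ⟨j, -, rfl⟩ := Finset.mem_image.mp ha
        obtain ⟨k, -, hk⟩ := Finset.mem_image.mp ha'
        exact Sum.inl_ne_inr hk.symm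
      have hcard : (((N s).image (Sum.inl : J → J ⊕ Fin d)) ∪
          ((Finset.univ : Finset (Fin d)).image Sum.inr)).card = (N s).card + d := by
        rw [Finset.card_union_of_disjoint hdisj,
          Finset.card_image_of_injective _ Sum.inl_injective,
          Finset.card_image_of_injective _ Sum.inr_injective]
        simp
      calc s.card ≤ (N s).card + d := hdle s
        _ = _ := hcard.symm
        _ ≤ (s.biUnion t).card := Finset.card_le_card hsub
  obtain ⟨f, hfinj, hft⟩ :=
    (Finset.all_card_le_biUnion_card_iff_exists_injective t).mp hall
  -- the matching
  set μ' : Finset (I × J) := G'.filter (fun q => f q.1 = Sum.inl q.2) with hμ'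
  have hμsub : μ' ⊆ G' := Finset.filter_subset _ _
  have hμmem : ∀ q ∈ μ', f q.1 = Sum.inl q.2 := fun q hq => (Finset.mem_filter.mp hq).2
  have hmatch : ∀ p ∈ μ', ∀ q ∈ μ', p ≠ q → p.1 ≠ q.1 ∧ p.2 ≠ q.2 := by
    intro p hp q hq hne
    constructor
    · intro h
      apply hne
      have : (Sum.inl p.2 : J ⊕ Fin d) = Sum.inl q.2 := by
        rw [← hμmem p hp, ← hμmem q hq, h]
      exact Prod.ext h (Sum.inl_injective this)
    · intro h
      apply hne
      have : f p.1 = f q.1 := by rw [hμmem p hp, hμmem q hq, h]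
      exact Prod.ext (hfinj this) h
  -- each i with f i = inl j gives an edge
  have hedge : ∀ i j, f i = Sum.inl j → (i, j) ∈ μ' := by
    intro i j hij
    have hti := hft i
    rw [ht] at hti
    simp only at hti
    rw [hij] at hti
    rcases Finset.mem_union.mp hti with h | h
    · obtain ⟨j', hj', hjj⟩ := Finset.mem_image.mp h
      have hj2 : j' = j := Sum.inl_injective hjj
      subst hj2
      obtain ⟨q, hq, rfl⟩ := Finset.mem_image.mp hj'
      have hq' := Finset.mem_filter.mp hq
      have hq1 : q.1 = i := Finset.mem_singleton.mp hq'.2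
      have hqG : (i, q.2) ∈ G' := by rw [← hq1]; exact hq'.1
      exact Finset.mem_filter.mpr ⟨hqG, by simpa using hij⟩
    · obtain ⟨k, -, hk⟩ := Finset.mem_image.mp h
      exact absurd hk (by simp)
  -- cardinality bound: Fintype.card I ≤ μ'.card + d
  have hcard_ge : Fintype.card I ≤ μ'.card + d := by
    set g : I → (I × J) ⊕ Fin d :=
      fun i => (f i).elim (fun j => Sum.inl (i, j)) Sum.inr with hg
    have hginj : Function.Injective g := by
      intro a b hab
      rcases h : f a with j | k <;> rcases h' : f b with j' | k' <;>
        simp only [hg, h, h', Sum.elim_inl, Sum.elim_inr] at hab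
      · exact congrArg Prod.fst (Sum.inl_injective hab)
      · exact absurd hab (by simp)
      · exact absurd hab (by simp)
      · exact hfinj (by rw [h, h', Sum.inr_injective hab])
    have himg : Finset.univ.image g ⊆
        (μ'.image Sum.inl) ∪ ((Finset.univ : Finset (Fin d)).image Sum.inr) := by
      intro a ha
      obtain ⟨i, -, rfl⟩ := Finset.mem_image.mp ha
      rcases h : f i with j | k
      · refine Finset.mem_union_left _ (Finset.mem_image.mpr ⟨(i, j), hedge i j h, ?_⟩)
        simp [hg, h]
      · refine Finset.mem_union_right _ (Finset.mem_image.mpr ⟨k, Finset.mem_univ _, ?_⟩)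
        simp [hg, h]
    calc Fintype.card I = (Finset.univ.image g).card := by
          rw [Finset.card_image_of_injective _ hginj, Finset.card_univ]
      _ ≤ ((μ'.image Sum.inl) ∪ ((Finset.univ : Finset (Fin d)).image Sum.inr)).card :=
          Finset.card_le_card himg
      _ ≤ (μ'.image Sum.inl).card + ((Finset.univ : Finset (Fin d)).image Sum.inr).card :=
          Finset.card_union_le _ _
      _ = μ'.card + d := by
          rw [Finset.card_image_of_injective _ Sum.inl_injective,
            Finset.card_image_of_injective _ Sum.inr_injective]
          simp
  -- the cover
  set x' : I → ℝ := fun i => if i ∈ S then 0 else 1 with hx'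
  set y' : J → ℝ := fun j => if j ∈ N S then 1 else 0 with hy'
  have hxnn : ∀ i, 0 ≤ x' i := by intro i; rw [hx']; dsimp; split <;> norm_num
  have hynn : ∀ j, 0 ≤ y' j := by intro j; rw [hy']; dsimp; split <;> norm_num
  have hcov : ∀ q ∈ G', (1:ℝ) ≤ x' q.1 + y' q.2 := by
    intro q hq
    by_cases h : q.1 ∈ S
    · have : q.2 ∈ N S :=
        Finset.mem_image.mpr ⟨q, Finset.mem_filter.mpr ⟨hq, h⟩, rfl⟩
      simp [hx', hy', h, this]
    · have h1 : x' q.1 = 1 := by simp [hx', h]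
      have h2 := hynn q.2
      linarith
  have hsumx : ∑ i, x' i = (Fintype.card I : ℝ) - S.card := by
    rw [hx', Finset.sum_ite]
    simp only [Finset.sum_const_zero, Finset.sum_const, nsmul_eq_mul, mul_one, zero_add]
    have hc : Finset.univ.filter (fun i => ¬ i ∈ S) = Sᶜ := by
      ext i; simp
    rw [hc, Finset.card_compl, Nat.cast_sub (by simpa using S.card_le_univ)]
  have hsumy : ∑ j, y' j = ((N S).card : ℝ) := by
    rw [hy', Finset.sum_ite]
    simp only [Finset.sum_const_zero, Finset.sum_const, nsmul_eq_mul, mul_one, add_zero]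
    congr 1
    rw [Finset.filter_univ_mem]
  have hSle : S.card ≤ Fintype.card I := by simpa using S.card_le_univ
  have htotal : ∑ i, x' i + ∑ j, y' j = (Fintype.card I : ℝ) - d := by
    rw [hsumx, hsumy]
    have : (S.card : ℝ) = ((N S).card : ℝ) + d := by exact_mod_cast hS
    linarith
  have hle : (μ'.card : ℝ) ≤ ∑ i, x' i + ∑ j, y' j := by
    have h1 : (μ'.card : ℝ) = ∑ q ∈ μ', (1:ℝ) := by simp
    rw [h1]
    calc ∑ q ∈ μ', (1:ℝ) ≤ ∑ q ∈ μ', (x' q.1 + y' q.2) :=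
          Finset.sum_le_sum (fun q hq => hcov q (hμsub hq))
      _ = ∑ q ∈ μ', x' q.1 + ∑ q ∈ μ', y' q.2 := Finset.sum_add_distrib
      _ ≤ ∑ i, x' i + ∑ j, y' j :=
          add_le_add (sum_fst_le μ' x' hmatch hxnn) (sum_snd_le μ' y' hmatch hynn)
  have hge : (Fintype.card I : ℝ) - d ≤ (μ'.card : ℝ) := by
    have : (Fintype.card I : ℝ) ≤ (μ'.card : ℝ) + d := by exact_mod_cast hcard_ge
    linarith
  refine ⟨μ', x', y', ⟨hμsub, hmatch⟩, hxnn, hynn, hcov, ?_⟩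
  rw [htotal]
  rw [htotal] at hle
  linarith


lemma exists_stable (G' : Finset (I × J)) (v : I × J → ℝ)
    (hv' : ∀ q ∈ G', v q = 1) :
    ∃ μ' x' y', Stable G' v μ' x' y' := by
  obtain ⟨μ', x', y', hm, hx, hy, hcov, htot⟩ := exists_cover_matching G'
  refine ⟨μ', x', y', hm, ?_, hx, hy, fun p hp => ?_⟩
  · unfold Feasible
    rw [surplus_eq_card hv' hm.1]
    exact htot
  · rw [hv' p hp]; exact hcov p hp

lemma outside_zero {G μ : Finset (I × J)} {v : I × J → ℝ} {x : I → ℝ} {y : J → ℝ}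
    (hv : ∀ q ∈ G, v q = 1) (hst : Stable G v μ x y)
    {p : I × J} (hp : p ∈ μ) (hess : Essential G v p)
    {μ' : Finset (I × J)} {x' : I → ℝ} {y' : J → ℝ}
    (hst' : Stable (G.erase p) v μ' x' y') :
    x' p.1 = 0 ∧ y' p.2 = 0 := by
  have hopt : Optimal G v μ := stable_optimal hv hst
  obtain ⟨hm, hf, hx, hy, hcov⟩ := hst
  obtain ⟨hm', hf', hx', hy', hcov'⟩ := hst'
  have hvG' : ∀ q ∈ G.erase p, v q = 1 := fun q hq => hv q (Finset.mem_of_mem_erase hq)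
  have hm'' : μ.erase p ⊆ G.erase p := by
    intro q hq
    rcases Finset.mem_erase.mp hq with ⟨hqp, hqμ⟩
    exact Finset.mem_erase.mpr ⟨hqp, hm.1 hqμ⟩
  have hmpair : ∀ a ∈ μ.erase p, ∀ b ∈ μ.erase p, a ≠ b → a.1 ≠ b.1 ∧ a.2 ≠ b.2 :=
    fun a ha b hb => hm.2 a (Finset.mem_of_mem_erase ha) b (Finset.mem_of_mem_erase hb)
  have hμ'G : IsMatching G μ' := ⟨fun q hq => Finset.mem_of_mem_erase (hm'.1 hq), hm'.2⟩
  have hcards : μ'.card + 1 ≤ μ.card := by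
    by_contra hcon
    push_neg at hcon
    have hμ'opt : Optimal G v μ' := by
      refine ⟨hμ'G, fun μ0 h0 => ?_⟩
      calc surplus v μ0 ≤ surplus v μ := hopt.2 μ0 h0
        _ = (μ.card : ℝ) := surplus_eq_card hv hm.1
        _ ≤ (μ'.card : ℝ) := by
          have : μ.card ≤ μ'.card := by omega
          exact_mod_cast this
        _ = surplus v μ' := (surplus_eq_card hv hμ'G.1).symm
    have := hess.2 μ' hμ'opt
    exact (Finset.mem_erase.mp (hm'.1 this)).1 rfl
  have hpμ : p ∈ μ := hp
  have hcard_erase : (μ.erase p).card = μ.card - 1 := Finset.card_erase_of_mem hp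
  have htot : ∑ i, x' i + ∑ j, y' j ≤ ((μ.erase p).card : ℝ) := by
    rw [hf', surplus_eq_card hvG' hm'.1, hcard_erase]
    have h1 : μ'.card ≤ μ.card - 1 := by omega
    exact_mod_cast h1
  have hcov1 : ∀ q ∈ G.erase p, (1:ℝ) ≤ x' q.1 + y' q.2 := by
    intro q hq; have := hcov' q hq; rwa [hvG' q hq] at this
  constructor
  · apply vanish_fst hmpair hm'' hx' hy' hcov1 htot
    intro q hq h
    exact ((hm.2 q (Finset.mem_of_mem_erase hq) p hp (Finset.mem_erase.mp hq).1).1 h).elim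
  · apply vanish_snd hmpair hm'' hx' hy' hcov1 htot
    intro q hq h
    exact ((hm.2 q (Finset.mem_of_mem_erase hq) p hp (Finset.mem_erase.mp hq).1).2 h).elim

end helper2

theorem stmt15 [Fintype I] [Fintype J] [DecidableEq I] [DecidableEq J]
    (G μ : Finset (I × J)) (v : I × J → ℝ) (x : I → ℝ) (y : J → ℝ)
    (hv : ∀ q ∈ G, v q = 1) :
    CBS G v μ x y ↔
      (Stable G v μ x y ∧
        ∀ p ∈ μ, Essential G v p → x p.1 = 1/2 ∧ y p.2 = 1/2) := by
  constructor
  · rintro ⟨hst, hcbs⟩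
    refine ⟨hst, fun p hp hess => ?_⟩
    obtain ⟨di, dj, ⟨μ', x', y', hst', hdi, hdj⟩, hnbs⟩ := hcbs p hp
    obtain ⟨h0i, h0j⟩ := outside_zero hv hst hp hess hst'
    have hvp : v p = 1 := hv p (hst.1.1 hp)
    rw [hvp, hdi, hdj, h0i, h0j] at hnbs
    norm_num [NBS, Prod.ext_iff] at hnbs
    exact hnbs
  · rintro ⟨hst, hhalf⟩
    refine ⟨hst, fun p hp => ?_⟩
    have hpG : p ∈ G := hst.1.1 hp
    have hvp : v p = 1 := hv p hpG
    by_cases hess : Essential G v p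
    · obtain ⟨hx12, hy12⟩ := hhalf p hp hess
      have hvG' : ∀ q ∈ G.erase p, v q = 1 := fun q hq => hv q (Finset.mem_of_mem_erase hq)
      obtain ⟨μ', x', y', hst'⟩ := exists_stable (G.erase p) v hvG'
      obtain ⟨h0i, h0j⟩ := outside_zero hv hst hp hess hst'
      refine ⟨0, 0, ⟨μ', x', y', hst', h0i.symm, h0j.symm⟩, ?_⟩
      rw [hx12, hy12, hvp]
      norm_num [NBS, Prod.ext_iff]
    · have hne : ∃ μ0, Optimal G v μ0 ∧ p ∉ μ0 := by
        unfold Essential at hess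
        push_neg at hess
        exact hess hpG
      obtain ⟨μ0, hopt0, hpμ0⟩ := hne
      have hopt : Optimal G v μ := stable_optimal hv hst
      have hpair : x p.1 + y p.2 = 1 := stable_pair_eq hv hst hp
      obtain ⟨hm, hf, hxnn, hynn, hcov⟩ := hst
      have hsubs : μ0 ⊆ G.erase p := fun q hq =>
        Finset.mem_erase.mpr ⟨fun h => hpμ0 (h ▸ hq), hopt0.1.1 hq⟩
      have hsteq : surplus v μ0 = surplus v μ :=
        le_antisymm (hopt.2 μ0 hopt0.1) (hopt0.2 μ hm)
      have hstab' : Stable (G.erase p) v μ0 x y := by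
        refine ⟨⟨hsubs, hopt0.1.2⟩, ?_, hxnn, hynn,
          fun q hq => hcov q (Finset.mem_of_mem_erase hq)⟩
        unfold Feasible
        rw [hsteq]
        exact hf
      refine ⟨x p.1, y p.2, ⟨μ0, x, y, hstab', rfl, rfl⟩, ?_⟩
      rw [hvp]
      simp only [NBS, Prod.mk.injEq]
      constructor <;> linarith
end

section
/- In the line market with agents 1,2,3,4, links {12, 23, 34}, and unit surplus, (μ, x) is a credible bargaining solution if and only if μ = {12, 34} and x = (1/2, 1/2, 1/2, 1/2). -/
open Finset

variable {I J : Type*}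

instance (G μ : Finset (Fin 2 × Fin 2)) : Decidable (IsMatching G μ) := by
  unfold IsMatching; infer_instance

lemma match_card_G (μ : Finset (Fin 2 × Fin 2))
    (h : IsMatching ({(0,0), (1,0), (1,1)} : Finset (Fin 2 × Fin 2)) μ) :
    μ.card ≤ 2 ∧ (μ.card = 2 → μ = ({(0,0), (1,1)} : Finset (Fin 2 × Fin 2))) := by
  revert h; revert μ; decide

lemma match_card_e1 (μ : Finset (Fin 2 × Fin 2))
    (h : IsMatching ({(1,0), (1,1)} : Finset (Fin 2 × Fin 2)) μ) : μ.card ≤ 1 := by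
  revert h; revert μ; decide

lemma match_card_e2 (μ : Finset (Fin 2 × Fin 2))
    (h : IsMatching ({(0,0), (1,0)} : Finset (Fin 2 × Fin 2)) μ) : μ.card ≤ 1 := by
  revert h; revert μ; decide

/-- Line market: agents 1,2,3,4; buyers {1,3} (indices 0,1), sellers {2,4}
(indices 0,1); links 12 = (0,0), 23 = (1,0), 34 = (1,1); unit surplus. -/
theorem stmt17 (μ : Finset (Fin 2 × Fin 2)) (x y : Fin 2 → ℝ) :
    CBS ({(0,0), (1,0), (1,1)} : Finset (Fin 2 × Fin 2)) (fun _ => (1:ℝ)) μ x y ↔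
      (μ = ({(0,0), (1,1)} : Finset (Fin 2 × Fin 2)) ∧
        x 0 = 1/2 ∧ y 0 = 1/2 ∧ x 1 = 1/2 ∧ y 1 = 1/2) := by
  constructor
  · rintro ⟨⟨hm, hfeas, hx, hy, hlink⟩, hnbs⟩
    have h00 : (1:ℝ) ≤ x 0 + y 0 := hlink (0,0) (by decide)
    have h10 : (1:ℝ) ≤ x 1 + y 0 := hlink (1,0) (by decide)
    have h11 : (1:ℝ) ≤ x 1 + y 1 := hlink (1,1) (by decide)
    have hfe : x 0 + x 1 + (y 0 + y 1) = (μ.card : ℝ) := by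
      simpa [Feasible, surplus, Fin.sum_univ_two, mul_comm] using hfeas
    obtain ⟨hc2, hceq⟩ := match_card_G μ hm
    have hge : (2:ℝ) ≤ (μ.card : ℝ) := by linarith
    have hge' : 2 ≤ μ.card := by exact_mod_cast hge
    have hcard : μ.card = 2 := le_antisymm hc2 hge'
    have hμeq : μ = ({(0,0), (1,1)} : Finset (Fin 2 × Fin 2)) := hceq hcard
    have hsum2 : x 0 + x 1 + (y 0 + y 1) = 2 := by rw [hfe, hcard]; norm_num
    have case00 : x 0 = 1/2 ∧ y 0 = 1/2 := by
      obtain ⟨di, dj, ⟨μ', x', y', hst, hdi, hdj⟩, heq⟩ :=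
        hnbs (0,0) (by rw [hμeq]; decide)
      rw [show (({(0,0), (1,0), (1,1)} : Finset (Fin 2 × Fin 2)).erase (0,0)) =
        ({(1,0), (1,1)} : Finset (Fin 2 × Fin 2)) from by decide] at hst
      obtain ⟨hm', hfeas', hx', hy', hlink'⟩ := hst
      have g10 : (1:ℝ) ≤ x' 1 + y' 0 := hlink' (1,0) (by decide)
      have g11 : (1:ℝ) ≤ x' 1 + y' 1 := hlink' (1,1) (by decide)
      have hfe' : x' 0 + x' 1 + (y' 0 + y' 1) = (μ'.card : ℝ) := by
        simpa [Feasible, surplus, Fin.sum_univ_two] using hfeas'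
      have hc1 := match_card_e1 μ' hm'
      have hg : (1:ℝ) ≤ (μ'.card : ℝ) := by
        have := hx' 0; have := hy' 0; linarith
      have hge1 : 1 ≤ μ'.card := by exact_mod_cast hg
      have hcard1 : μ'.card = 1 := le_antisymm hc1 hge1
      have hsum1 : x' 0 + x' 1 + (y' 0 + y' 1) = 1 := by rw [hfe', hcard1]; norm_num
      have hdi0 : di = 0 := by
        have := hy' 1; have := hx' 0; rw [hdi]; linarith
      have hdj0 : dj = 0 := by
        have := hy' 1; have := hx' 0; have := hy' 0; rw [hdj]; linarith
      have h1 := congrArg Prod.fst heq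
      have h2 := congrArg Prod.snd heq
      simp only [NBS] at h1 h2
      constructor
      · rw [h1, hdi0, hdj0]; norm_num
      · rw [h2, hdi0, hdj0]; norm_num
    have case11 : x 1 = 1/2 ∧ y 1 = 1/2 := by
      obtain ⟨di, dj, ⟨μ', x', y', hst, hdi, hdj⟩, heq⟩ :=
        hnbs (1,1) (by rw [hμeq]; decide)
      rw [show (({(0,0), (1,0), (1,1)} : Finset (Fin 2 × Fin 2)).erase (1,1)) =
        ({(0,0), (1,0)} : Finset (Fin 2 × Fin 2)) from by decide] at hst
      obtain ⟨hm', hfeas', hx', hy', hlink'⟩ := hst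
      have g00 : (1:ℝ) ≤ x' 0 + y' 0 := hlink' (0,0) (by decide)
      have g10 : (1:ℝ) ≤ x' 1 + y' 0 := hlink' (1,0) (by decide)
      have hfe' : x' 0 + x' 1 + (y' 0 + y' 1) = (μ'.card : ℝ) := by
        simpa [Feasible, surplus, Fin.sum_univ_two] using hfeas'
      have hc1 := match_card_e2 μ' hm'
      have hg : (1:ℝ) ≤ (μ'.card : ℝ) := by
        have := hx' 1; have := hy' 1; linarith
      have hge1 : 1 ≤ μ'.card := by exact_mod_cast hg
      have hcard1 : μ'.card = 1 := le_antisymm hc1 hge1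
      have hsum1 : x' 0 + x' 1 + (y' 0 + y' 1) = 1 := by rw [hfe', hcard1]; norm_num
      have hdi0 : di = 0 := by
        have := hx' 1; have := hy' 1; rw [hdi]; linarith
      have hdj0 : dj = 0 := by
        have := hx' 1; have := hy' 1; rw [hdj]; linarith
      have h1 := congrArg Prod.fst heq
      have h2 := congrArg Prod.snd heq
      simp only [NBS] at h1 h2
      constructor
      · rw [h1, hdi0, hdj0]; norm_num
      · rw [h2, hdi0, hdj0]; norm_num
    exact ⟨hμeq, case00.1, case00.2, case11.1, case11.2⟩
  · rintro ⟨hμeq, hx0, hy0, hx1, hy1⟩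
    subst hμeq
    refine ⟨⟨⟨by decide, by decide⟩, ?_, ?_, ?_, ?_⟩, ?_⟩
    · simp only [Feasible, surplus, Fin.sum_univ_two, hx0, hy0, hx1, hy1]
      norm_num
    · intro i; fin_cases i <;> norm_num [hx0, hx1]
    · intro j; fin_cases j <;> norm_num [hy0, hy1]
    · intro p hp
      fin_cases hp <;> simp only [hx0, hy0, hx1, hy1] <;> norm_num
    · intro p hp
      fin_cases hp
      · refine ⟨0, 0, ⟨{(1,1)}, ![0,1], ![0,0],
          ⟨⟨by decide, by decide⟩, ?_, ?_, ?_, ?_⟩, by norm_num, by norm_num⟩, ?_⟩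
        · simp [Feasible, surplus, Fin.sum_univ_two]
        · intro i; fin_cases i <;> norm_num
        · intro j; fin_cases j <;> norm_num
        · intro q hq
          rw [show (({(0,0), (1,0), (1,1)} : Finset (Fin 2 × Fin 2)).erase (0,0)) =
            ({(1,0), (1,1)} : Finset (Fin 2 × Fin 2)) from by decide] at hq
          fin_cases hq <;> norm_num
        · simp only [NBS, hx0, hy0]; norm_num
      · refine ⟨0, 0, ⟨{(0,0)}, ![0,0], ![1,0],
          ⟨⟨by decide, by decide⟩, ?_, ?_, ?_, ?_⟩, by norm_num, by norm_num⟩, ?_⟩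
        · simp [Feasible, surplus, Fin.sum_univ_two]
        · intro i; fin_cases i <;> norm_num
        · intro j; fin_cases j <;> norm_num
        · intro q hq
          rw [show (({(0,0), (1,0), (1,1)} : Finset (Fin 2 × Fin 2)).erase (1,1)) =
            ({(0,0), (1,0)} : Finset (Fin 2 × Fin 2)) from by decide] at hq
          fin_cases hq <;> norm_num
        · simp only [NBS, hx1, hy1]; norm_num
end
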